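/- Let T ⊆ 2^{<ω} be a tree, w_t = μ([T]∩N_t)/μ(N_t), and for c ∈ (0,1) let r_{t,i}(c) be the fraction of nodes u on level |t|+i of T_t with w_u ≥ c. Then for every t with w_t > 0 and every c ∈ (0,1), liminf_{i→∞} r_{t,i}(c) ≥ c; equivalently, liminf_i inf{ c : r_{t,i}(c) ≥ c } = 1. -/

import Mathlib

open MeasureTheory Filter Set
open scoped ENNReal

noncomputable section

/-- The restriction `x↾n` of `x : ℕ → α` to its first `n` values, as a list. -/
def res {α : Type*} (x : ℕ → α) (n : ℕ) : List α := List.ofFn (fun i : Fin n => x i)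

/-- The basic clopen cylinder `N_s` of all extensions of the finite string `s`. -/
def Cyl {α : Type*} (s : List α) : Set (ℕ → α) := {x | res x s.length = s}

/-- A (set-theoretic) tree: a collection of finite sequences closed under initial
segments. -/
def IsTree {α : Type*} (T : Set (List α)) : Prop :=
  ∀ s ∈ T, ∀ t : List α, t <+: s → t ∈ T

/-- The set `[T]` of branches of a tree `T`. -/
def branches {α : Type*} (T : Set (List α)) : Set (ℕ → α) :=
  {x | ∀ n : ℕ, res x n ∈ T}

/-- The level `Lev_{|t|+i}(T_t)` of the restricted tree `T_t` at height `|t| + i`. -/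
def lev (T : Set (List Bool)) (t : List Bool) (i : ℕ) : Set (List Bool) :=
  {u | u ∈ T ∧ t <+: u ∧ u.length = t.length + i}

/-- The weight `w_t = μ([T] ∩ N_t) / μ(N_t)` of the node `t` in the tree `T`. -/
def wt (μ : Measure (ℕ → Bool)) (T : Set (List Bool)) (t : List Bool) : ℝ≥0∞ :=
  μ (branches T ∩ Cyl t) / μ (Cyl t)

lemma length_res {α : Type*} (x : ℕ → α) (n : ℕ) : (res x n).length = n :=
  List.length_ofFn

lemma res_take {α : Type*} (x : ℕ → α) {m n : ℕ} (h : m ≤ n) :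
    res x m = (res x n).take m := by
  apply List.ext_getElem
  · simp [length_res, h]
  · intro i h1 h2
    simp [res, List.getElem_take]

lemma res_prefix {α : Type*} (x : ℕ → α) {m n : ℕ} (h : m ≤ n) :
    res x m <+: res x n := by
  rw [List.prefix_iff_eq_take, length_res]
  exact res_take x h

lemma mem_Cyl {α : Type*} {s : List α} {x : ℕ → α} : x ∈ Cyl s ↔ res x s.length = s :=
  Iff.rfl

lemma mem_Cyl_res {α : Type*} (x : ℕ → α) (n : ℕ) : x ∈ Cyl (res x n) := by
  simp [mem_Cyl, length_res]

lemma measurableSet_Cyl (s : List Bool) : MeasurableSet (Cyl s) := by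
  have : Cyl s = ⋂ i : Fin s.length, {x : ℕ → Bool | x i = s.get i} := by
    ext x
    simp only [mem_Cyl, Set.mem_iInter, Set.mem_setOf_eq]
    constructor
    · intro h i
      have := List.getElem_of_eq h (i := i) (by simp [length_res])
      simpa [res] using this
    · intro h
      apply List.ext_getElem (by simp [length_res])
      intro i h1 h2
      simpa [res] using h ⟨i, h2⟩
  rw [this]
  exact MeasurableSet.iInter fun i =>
    (measurable_pi_apply (i : ℕ)) (MeasurableSet.singleton _)

lemma finite_length (n : ℕ) : {u : List Bool | u.length = n}.Finite := by
  have : {u : List Bool | u.length = n} ⊆ List.ofFn '' (Set.univ : Set (Fin n → Bool)) := by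
    intro u hu
    have hu' : u.length = n := hu
    refine ⟨fun i => u.get (Fin.cast hu'.symm i), trivial, ?_⟩
    apply List.ext_getElem (by simp [hu'])
    intro i h1 h2
    simp
  exact (Set.finite_univ.image _).subset this

lemma finite_lev (T : Set (List Bool)) (t : List Bool) (i : ℕ) : (lev T t i).Finite :=
  (finite_length (t.length + i)).subset fun u hu => hu.2.2

lemma measurableSet_resLevel (T : Set (List Bool)) (n : ℕ) :
    MeasurableSet {x : ℕ → Bool | res x n ∈ T} := by
  have : {x : ℕ → Bool | res x n ∈ T}
      = ⋃ s ∈ {s : List Bool | s.length = n ∧ s ∈ T}, Cyl s := by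
    ext x
    simp only [Set.mem_setOf_eq, Set.mem_iUnion]
    constructor
    · intro h
      exact ⟨res x n, ⟨length_res x n, h⟩, mem_Cyl_res x n⟩
    · rintro ⟨s, ⟨hlen, hs⟩, hx⟩
      rw [mem_Cyl, hlen] at hx
      rwa [hx]
  rw [this]
  exact MeasurableSet.biUnion (((finite_length n).subset (fun s hs => hs.1)).countable)
    (fun s _ => measurableSet_Cyl s)

lemma measurableSet_branches (T : Set (List Bool)) : MeasurableSet (branches T) := by
  have : branches T = ⋂ n : ℕ, {x : ℕ → Bool | res x n ∈ T} := by
    ext x; simp [branches]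
  rw [this]
  exact MeasurableSet.iInter fun n => measurableSet_resLevel T n

lemma Cyl_disjoint {u v : List Bool} (hne : u ≠ v) (hlen : u.length = v.length) :
    Disjoint (Cyl u) (Cyl v) := by
  rw [Set.disjoint_left]
  intro x hu hv
  rw [mem_Cyl] at hu hv
  exact hne (by rw [← hu, ← hv, hlen])

lemma mem_Cyl_of_lev {T : Set (List Bool)} {t u : List Bool} {i : ℕ} (hu : u ∈ lev T t i)
    {x : ℕ → Bool} (hx : x ∈ Cyl u) : x ∈ Cyl t := by
  rw [mem_Cyl] at hx ⊢
  have hlt : t.length ≤ u.length := hu.2.2 ▸ Nat.le_add_right _ _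
  have h1 : res x t.length <+: u := hx ▸ res_prefix x hlt
  rw [List.prefix_iff_eq_take, length_res] at h1
  rw [h1, ← (List.prefix_iff_eq_take.mp hu.2.1)]

lemma branches_decomp {T : Set (List Bool)} (hT : IsTree T) (t : List Bool) (i : ℕ) :
    branches T ∩ Cyl t = ⋃ u ∈ lev T t i, (branches T ∩ Cyl u) := by
  ext x
  simp only [Set.mem_inter_iff, Set.mem_iUnion, exists_prop]
  constructor
  · rintro ⟨hb, hx⟩
    refine ⟨res x (t.length + i), ⟨hb _, ?_, length_res _ _⟩, hb, mem_Cyl_res _ _⟩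
    rw [mem_Cyl] at hx
    have := res_prefix x (Nat.le_add_right t.length i)
    rwa [hx] at this
  · rintro ⟨u, hu, hb, hx⟩
    exact ⟨hb, mem_Cyl_of_lev hu hx⟩

lemma Cyl_ne_zero (μ : Measure (ℕ → Bool))
    (hμ : ∀ s : List Bool, μ (Cyl s) = (1 / 2 : ℝ≥0∞) ^ s.length) (s : List Bool) :
    μ (Cyl s) ≠ 0 := by
  rw [hμ]
  exact pow_ne_zero _ (by norm_num)

lemma Cyl_ne_top (μ : Measure (ℕ → Bool))
    (hμ : ∀ s : List Bool, μ (Cyl s) = (1 / 2 : ℝ≥0∞) ^ s.length) (s : List Bool) :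
    μ (Cyl s) ≠ ⊤ := by
  rw [hμ]
  exact ENNReal.pow_ne_top (by simp)

lemma wt_mul (μ : Measure (ℕ → Bool))
    (hμ : ∀ s : List Bool, μ (Cyl s) = (1 / 2 : ℝ≥0∞) ^ s.length)
    (T : Set (List Bool)) (u : List Bool) :
    μ (branches T ∩ Cyl u) = wt μ T u * μ (Cyl u) :=
  (ENNReal.div_mul_cancel (Cyl_ne_zero μ hμ u) (Cyl_ne_top μ hμ u)).symm

lemma measure_decomp (μ : Measure (ℕ → Bool)) {T : Set (List Bool)} (hT : IsTree T)
    (t : List Bool) (i : ℕ) :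
    μ (branches T ∩ Cyl t) = ∑ u ∈ (finite_lev T t i).toFinset, μ (branches T ∩ Cyl u) := by
  rw [branches_decomp hT t i]
  have : ⋃ u ∈ lev T t i, (branches T ∩ Cyl u)
      = ⋃ u ∈ (finite_lev T t i).toFinset, (branches T ∩ Cyl u) := by
    simp [Set.Finite.mem_toFinset]
  rw [this]
  refine measure_biUnion_finset ?_ (fun u _ => (measurableSet_branches T).inter (measurableSet_Cyl u))
  intro u hu v hv hne
  simp only [Set.Finite.coe_toFinset] at hu hv
  exact ((Cyl_disjoint hne (by rw [hu.2.2, hv.2.2])).mono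
    Set.inter_subset_right Set.inter_subset_right)

lemma measure_union_lev (μ : Measure (ℕ → Bool))
    (hμ : ∀ s : List Bool, μ (Cyl s) = (1 / 2 : ℝ≥0∞) ^ s.length)
    (T : Set (List Bool)) (t : List Bool) (i : ℕ) :
    μ (⋃ u ∈ lev T t i, Cyl u)
      = ((lev T t i).ncard : ℝ≥0∞) * (1 / 2 : ℝ≥0∞) ^ (t.length + i) := by
  have h1 : ⋃ u ∈ lev T t i, Cyl u = ⋃ u ∈ (finite_lev T t i).toFinset, Cyl u := by
    simp [Set.Finite.mem_toFinset]
  rw [h1, measure_biUnion_finset ?_ (fun u _ => measurableSet_Cyl u)]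
  · rw [Set.ncard_eq_toFinset_card _ (finite_lev T t i)]
    rw [Finset.sum_congr rfl (fun u hu => by
      rw [hμ u, (Set.Finite.mem_toFinset _ |>.mp hu).2.2])]
    simp [mul_comm]
  · intro u hu v hv hne
    simp only [Set.Finite.coe_toFinset] at hu hv
    exact Cyl_disjoint hne (by rw [hu.2.2, hv.2.2])

lemma lev_antitone {T : Set (List Bool)} (hT : IsTree T) (t : List Bool) :
    Antitone (fun i => ⋃ u ∈ lev T t i, Cyl u) := by
  apply antitone_nat_of_succ_le
  intro i x hx
  simp only [Set.mem_iUnion, exists_prop] at hx ⊢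
  obtain ⟨u, hu, hxu⟩ := hx
  refine ⟨res x (t.length + i), ⟨?_, ?_, length_res _ _⟩, mem_Cyl_res _ _⟩
  · have hpre : res x (t.length + i) <+: u := by
      have := res_prefix x (Nat.le_succ (t.length + i))
      rw [mem_Cyl, hu.2.2] at hxu
      rwa [show (t.length + i).succ = t.length + (i+1) from rfl, hxu] at this
    exact hT u hu.1 _ hpre
  · have hpre : res x (t.length + i) <+: u := by
      have := res_prefix x (Nat.le_succ (t.length + i))
      rw [mem_Cyl, hu.2.2] at hxu
      rwa [show (t.length + i).succ = t.length + (i+1) from rfl, hxu] at this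
    exact List.prefix_of_prefix_length_le hu.2.1 hpre
      (by rw [length_res]; exact Nat.le_add_right _ _)

lemma iInter_lev {T : Set (List Bool)} (hT : IsTree T) (t : List Bool) :
    ⋂ i, ⋃ u ∈ lev T t i, Cyl u = branches T ∩ Cyl t := by
  ext x
  simp only [Set.mem_iInter, Set.mem_iUnion, exists_prop, Set.mem_inter_iff]
  constructor
  · intro h
    obtain ⟨u0, hu0, hxu0⟩ := h 0
    have hu0t : u0 = t := (List.IsPrefix.eq_of_length hu0.2.1
      (by rw [hu0.2.2, Nat.add_zero])).symm
    subst hu0t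
    have hxt : x ∈ Cyl u0 := hxu0
    refine ⟨?_, hxt⟩
    intro n
    rcases Nat.le_total n u0.length with hn | hn
    · have : res x n <+: u0 := by
        have := res_prefix x hn
        rwa [mem_Cyl.mp hxt] at this
      exact hT u0 hu0.1 _ this
    · obtain ⟨i, rfl⟩ := Nat.exists_eq_add_of_le hn
      obtain ⟨u, hu, hxu⟩ := h i
      rw [mem_Cyl, hu.2.2] at hxu
      rw [hxu]
      exact hu.1
  · rintro ⟨hb, hx⟩ i
    refine ⟨res x (t.length + i), ⟨hb _, ?_, length_res _ _⟩, mem_Cyl_res _ _⟩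
    have := res_prefix x (Nat.le_add_right t.length i)
    rwa [mem_Cyl.mp hx] at this

lemma tendsto_lev_card (μ : Measure (ℕ → Bool))
    (hμ : ∀ s : List Bool, μ (Cyl s) = (1 / 2 : ℝ≥0∞) ^ s.length)
    {T : Set (List Bool)} (hT : IsTree T) (t : List Bool) :
    Tendsto (fun i => ((lev T t i).ncard : ℝ≥0∞) * (1 / 2 : ℝ≥0∞) ^ (t.length + i))
      atTop (nhds (μ (branches T ∩ Cyl t))) := by
  have h1 : ∀ i, μ (⋃ u ∈ lev T t i, Cyl u)
      = ((lev T t i).ncard : ℝ≥0∞) * (1 / 2 : ℝ≥0∞) ^ (t.length + i) :=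
    measure_union_lev μ hμ T t
  have hfin : μ ((fun i => ⋃ u ∈ lev T t i, Cyl u) 0) ≠ ⊤ := by
    rw [h1 0]
    exact ENNReal.mul_ne_top (by simp) (ENNReal.pow_ne_top (by simp))
  have h2 := MeasureTheory.tendsto_measure_iInter_atTop (μ := μ)
    (s := fun i => ⋃ u ∈ lev T t i, Cyl u)
    (fun i => ((MeasurableSet.biUnion ((finite_lev T t i).countable)
      (fun u _ => measurableSet_Cyl u)).nullMeasurableSet))
    (lev_antitone hT t) ⟨0, hfin⟩
  rw [iInter_lev hT t] at h2
  exact h2.congr (fun i => h1 i)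


/-- If `w_t > 0` then for every `c ∈ (0,1)`, the fraction `r_{t,i}(c)` of nodes `u` on
level `|t| + i` of `T_t` with `w_u ≥ c` satisfies `liminf_{i→∞} r_{t,i}(c) ≥ c`. -/
theorem stmt17 (μ : Measure (ℕ → Bool))
    (hμ : ∀ s : List Bool, μ (Cyl s) = (1 / 2 : ℝ≥0∞) ^ s.length)
    (T : Set (List Bool)) (hT : IsTree T) (t : List Bool)
    (hpos : 0 < wt μ T t) (c : ℝ) (hc : c ∈ Set.Ioo (0 : ℝ) 1) :
    ENNReal.ofReal c ≤
      Filter.liminf (fun i : ℕ =>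
        (((lev T t i ∩ {u | ENNReal.ofReal c ≤ wt μ T u}).ncard : ℝ≥0∞)) /
          ((lev T t i).ncard : ℝ≥0∞)) Filter.atTop := by
  classical
  obtain ⟨hc0, hc1⟩ := hc
  set M := μ (branches T ∩ Cyl t) with hM
  have hMne0 : M ≠ 0 := by
    intro h
    rw [wt, ← hM, h, ENNReal.zero_div] at hpos
    exact lt_irrefl _ hpos
  have hMnetop : M ≠ ⊤ :=
    ne_top_of_le_ne_top (Cyl_ne_top μ hμ t) (measure_mono Set.inter_subset_right)
  set q : ℕ → ℝ≥0∞ := fun i => (1 / 2 : ℝ≥0∞) ^ (t.length + i) with hq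
  have hqne0 : ∀ i, q i ≠ 0 := fun i => pow_ne_zero _ (by norm_num)
  have hqnetop : ∀ i, q i ≠ ⊤ := fun i => ENNReal.pow_ne_top (by simp)
  set N : ℕ → ℕ := fun i => (lev T t i).ncard with hN
  set H : ℕ → ℕ := fun i =>
    (lev T t i ∩ {u | ENNReal.ofReal c ≤ wt μ T u}).ncard with hH
  have hHN : ∀ i, H i ≤ N i := fun i =>
    Set.ncard_le_ncard Set.inter_subset_left (finite_lev T t i)
  -- the key pointwise inequality
  have key : ∀ i, ∃ L : ℕ, H i + L = N i ∧
      M ≤ ((H i : ℝ≥0∞) + ENNReal.ofReal c * (L : ℝ≥0∞)) * q i := by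
    intro i
    set S := (finite_lev T t i).toFinset with hS
    set P : List Bool → Prop := fun u => ENNReal.ofReal c ≤ wt μ T u with hP
    refine ⟨(S.filter (fun u => ¬ P u)).card, ?_, ?_⟩
    · have h1 : H i = (S.filter P).card := by
        have heq : lev T t i ∩ {u | ENNReal.ofReal c ≤ wt μ T u}
            = ↑(S.filter P) := by
          ext u
          simp [hS, hP, Set.Finite.mem_toFinset]
        calc H i = (lev T t i ∩ {u | ENNReal.ofReal c ≤ wt μ T u}).ncard := rfl
          _ = (S.filter P).card := by rw [heq, Set.ncard_coe_finset]
      have h2 : N i = S.card := by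
        calc N i = (lev T t i).ncard := rfl
          _ = S.card := Set.ncard_eq_toFinset_card _ (finite_lev T t i)
      rw [h1, h2]
      exact Finset.card_filter_add_card_filter_not (p := P)
    · have hdec : M = ∑ u ∈ S, μ (branches T ∩ Cyl u) := measure_decomp μ hT t i
      have hsplit : ∑ u ∈ S, μ (branches T ∩ Cyl u)
          = ∑ u ∈ S.filter P, μ (branches T ∩ Cyl u)
            + ∑ u ∈ S.filter (fun u => ¬ P u), μ (branches T ∩ Cyl u) :=
        (Finset.sum_filter_add_sum_filter_not S P _).symm
      have hcylq : ∀ u ∈ S, μ (Cyl u) = q i := by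
        intro u hu
        rw [hμ u, (Set.Finite.mem_toFinset _ |>.mp hu).2.2]
      have hheavy : ∑ u ∈ S.filter P, μ (branches T ∩ Cyl u)
          ≤ ((S.filter P).card : ℝ≥0∞) * q i := by
        rw [← nsmul_eq_mul]
        refine Finset.sum_le_card_nsmul _ _ _ ?_
        intro u hu
        have hu' := Finset.mem_filter.mp hu
        exact (measure_mono Set.inter_subset_right).trans_eq (hcylq u hu'.1)
      have hlight : ∑ u ∈ S.filter (fun u => ¬ P u), μ (branches T ∩ Cyl u)
          ≤ ((S.filter (fun u => ¬ P u)).card : ℝ≥0∞) * (ENNReal.ofReal c * q i) := by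
        rw [← nsmul_eq_mul]
        refine Finset.sum_le_card_nsmul _ _ _ ?_
        intro u hu
        have hu' := Finset.mem_filter.mp hu
        rw [wt_mul μ hμ T u, hcylq u hu'.1]
        exact mul_le_mul_left (le_of_not_ge hu'.2) _
      have h1 : H i = (S.filter P).card := by
        have heq : lev T t i ∩ {u | ENNReal.ofReal c ≤ wt μ T u}
            = ↑(S.filter P) := by
          ext u
          simp [hS, hP, Set.Finite.mem_toFinset]
        calc H i = (lev T t i ∩ {u | ENNReal.ofReal c ≤ wt μ T u}).ncard := rfl
          _ = (S.filter P).card := by rw [heq, Set.ncard_coe_finset]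
      calc M = _ := hdec
        _ = _ := hsplit
        _ ≤ ((S.filter P).card : ℝ≥0∞) * q i
            + ((S.filter (fun u => ¬ P u)).card : ℝ≥0∞) * (ENNReal.ofReal c * q i) :=
          add_le_add hheavy hlight
        _ = (((S.filter P).card : ℝ≥0∞)
            + ENNReal.ofReal c * ((S.filter (fun u => ¬ P u)).card : ℝ≥0∞)) * q i := by
          ring
        _ = ((H i : ℝ≥0∞)
            + ENNReal.ofReal c * ((S.filter (fun u => ¬ P u)).card : ℝ≥0∞)) * q i := by
          rw [h1]
  -- convergence
  have hconv : Tendsto (fun i => (N i : ℝ≥0∞) * q i) atTop (nhds M) :=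
    tendsto_lev_card μ hμ hT t
  set K := ENNReal.ofReal (c * (2 - c)) with hK
  have hKnetop : K ≠ ⊤ := ENNReal.ofReal_ne_top
  have hKlt1 : K < 1 := by
    rw [hK, ← ENNReal.ofReal_one]
    exact ENNReal.ofReal_lt_ofReal_iff (by norm_num) |>.mpr (by nlinarith)
  have hKM : K * M < M := by
    have := ENNReal.mul_lt_mul_left hMne0 hMnetop hKlt1
    rwa [one_mul] at this
  have hev : ∀ᶠ i in atTop, K * ((N i : ℝ≥0∞) * q i) < M :=
    (ENNReal.Tendsto.const_mul hconv (Or.inr hKnetop)).eventually_lt_const hKM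
  refine Filter.le_liminf_of_le ?_ ?_
  · isBoundedDefault
  refine hev.mono ?_
  intro i hi
  obtain ⟨L, hHL, hle⟩ := key i
  have hlt : K * (N i : ℝ≥0∞) < (H i : ℝ≥0∞) + ENNReal.ofReal c * (L : ℝ≥0∞) := by
    have h2 : K * (N i : ℝ≥0∞) * q i
        < ((H i : ℝ≥0∞) + ENNReal.ofReal c * (L : ℝ≥0∞)) * q i := by
      calc K * (N i : ℝ≥0∞) * q i = K * ((N i : ℝ≥0∞) * q i) := by ring
        _ < M := hi
        _ ≤ _ := hle
    exact (ENNReal.mul_left_strictMono (hqne0 i) (hqnetop i)).lt_iff_lt.mp h2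
  -- pass to the reals
  have hlhs_ne : K * (N i : ℝ≥0∞) ≠ ⊤ := ENNReal.mul_ne_top hKnetop (ENNReal.natCast_ne_top _)
  have hrhs_ne : (H i : ℝ≥0∞) + ENNReal.ofReal c * (L : ℝ≥0∞) ≠ ⊤ :=
    ENNReal.add_ne_top.mpr ⟨ENNReal.natCast_ne_top _,
      ENNReal.mul_ne_top ENNReal.ofReal_ne_top (ENNReal.natCast_ne_top _)⟩
  have hR := (ENNReal.toReal_lt_toReal hlhs_ne hrhs_ne).mpr hlt
  rw [ENNReal.toReal_mul, ENNReal.toReal_add (ENNReal.natCast_ne_top _)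
      (ENNReal.mul_ne_top ENNReal.ofReal_ne_top (ENNReal.natCast_ne_top _)),
    ENNReal.toReal_mul, hK, ENNReal.toReal_ofReal (by nlinarith),
    ENNReal.toReal_ofReal hc0.le, ENNReal.toReal_natCast, ENNReal.toReal_natCast, ENNReal.toReal_natCast] at hR
  have hHLr : (H i : ℝ) + (L : ℝ) = (N i : ℝ) := by exact_mod_cast congrArg (Nat.cast : ℕ → ℝ) hHL
  have hcN : c * (N i : ℝ) < (H i : ℝ) := by nlinarith
  have hNpos : (0:ℝ) < (N i : ℝ) := by
    rcases Nat.eq_zero_or_pos (N i) with h | h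
    · exfalso
      have hh : H i = 0 := Nat.le_zero.mp (h ▸ hHN i)
      rw [h, hh] at hcN
      norm_num at hcN
    · exact_mod_cast h
  have hNne : (N i : ℝ≥0∞) ≠ 0 :=
    Nat.cast_ne_zero.mpr (Nat.cast_pos.mp hNpos).ne'
  show ENNReal.ofReal c ≤ (H i : ℝ≥0∞) / (N i : ℝ≥0∞)
  rw [ENNReal.le_div_iff_mul_le (Or.inl hNne) (Or.inl (ENNReal.natCast_ne_top _))]
  calc ENNReal.ofReal c * (N i : ℝ≥0∞)
      = ENNReal.ofReal (c * (N i : ℝ)) := by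
        rw [ENNReal.ofReal_mul hc0.le, ENNReal.ofReal_natCast]
    _ ≤ ENNReal.ofReal (H i : ℝ) := ENNReal.ofReal_le_ofReal hcN.le
    _ = (H i : ℝ≥0∞) := ENNReal.ofReal_natCast _
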